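/- Let α be a real number with −1 < α < 0, and let 𝒯 ⊂ CP⁴ be the surface defined by the two equations y₁y₂ = y₀² and y₃y₄ = y₀(y₁ − αy₂ + (α−1)y₀) in homogeneous coordinates (y₀ : y₁ : y₂ : y₃ : y₄). Then the singular locus of 𝒯 consists exactly of the two points (0:0:0:1:0) and (0:0:0:0:1). -/

import Mathlib

/-!
Write `F = y₁y₂ - y₀²` and `G = y₃y₄ - y₀(y₁ - αy₂ + (α-1)y₀)`. On the surface, `∇G` never
vanishes, and `∇F = a ∇G` with `a ≠ 0` forces `y₃ = y₄ = 0`, `y₁ = aαy₀`, `y₂ = -ay₀`; then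
`F = 0` gives `a²α = -1` and the first coordinate gives `a(α-1) = 2`, which together say
`(α+1)² = 0`. So a point is singular exactly when `∇F = 0`, i.e. `y₀ = y₁ = y₂ = 0`, and `G = 0`
leaves the two points `y₃ = 0` or `y₄ = 0` of that line.
-/

namespace MinitwistorQuartic

variable {K : Type*} [Field K] {α : K} {v : Fin 5 → K}

def gradF (v : Fin 5 → K) : Fin 5 → K :=
  ![-2 * v 0, v 2, v 1, 0, 0]

def gradG (α : K) (v : Fin 5 → K) : Fin 5 → K :=
  ![-(v 1) + α * v 2 - 2 * (α - 1) * v 0, -(v 0), α * v 0, v 4, v 3]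

lemma eq_zero_of_coords (h0 : v 0 = 0) (h1 : v 1 = 0) (h2 : v 2 = 0) (h3 : v 3 = 0)
    (h4 : v 4 = 0) : v = 0 :=
  funext fun i => by fin_cases i <;> assumption

lemma gradG_ne_zero (hα : α ≠ 0) (hv : v ≠ 0) (hF : v 1 * v 2 = v 0 ^ 2) :
    gradG α v ≠ 0 := by
  intro hG
  have e : ∀ i, gradG α v i = 0 := fun i => congrFun hG i
  have e0 := e 0
  have hv0 : v 0 = 0 := neg_eq_zero.mp (e 1)
  have hv3 : v 3 = 0 := e 4
  have hv4 : v 4 = 0 := e 3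
  simp only [gradG, Matrix.cons_val_zero, hv0] at e0
  have hv1 : v 1 = α * v 2 := by linear_combination -e0
  have hv2 : v 2 = 0 := by
    have : α * v 2 ^ 2 = 0 := by rw [hv0, hv1] at hF; linear_combination hF
    exact pow_eq_zero_iff two_ne_zero |>.mp ((mul_eq_zero.mp this).resolve_left hα)
  exact hv (eq_zero_of_coords hv0 (by rw [hv1, hv2, mul_zero]) hv2 hv3 hv4)

lemma gradF_ne_smul_gradG (htwo : (2 : K) ≠ 0) (hα : α ≠ -1) (hv : v ≠ 0)
    (hF : v 1 * v 2 = v 0 ^ 2) {a : K} (ha : a ≠ 0) : a • gradG α v ≠ gradF v := by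
  intro h
  have e : ∀ i, a * gradG α v i = gradF v i := fun i => congrFun h i
  have e0 := e 0
  have e1 := e 1
  have e2 := e 2
  simp only [gradG, gradF, Matrix.cons_val_zero, Matrix.cons_val_one, Matrix.cons_val_two,
    Matrix.head_cons, Matrix.tail_cons] at e0 e1 e2
  have hv3 : v 3 = 0 := (mul_eq_zero.mp (e 4)).resolve_left ha
  have hv4 : v 4 = 0 := (mul_eq_zero.mp (e 3)).resolve_left ha
  have hv1 : v 1 = a * α * v 0 := by linear_combination -e2
  have hv2 : v 2 = -(a * v 0) := by linear_combination -e1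
  have hv0 : v 0 ≠ 0 := fun hv0 =>
    hv (eq_zero_of_coords hv0 (by simp [hv1, hv0]) (by simp [hv2, hv0]) hv3 hv4)
  have hsq : a ^ 2 * α = -1 := by
    have : (a ^ 2 * α + 1) * v 0 ^ 2 = 0 := by rw [hv1, hv2] at hF; linear_combination -hF
    linear_combination (mul_eq_zero.mp this).resolve_right (pow_ne_zero 2 hv0)
  have hlin : a * (α - 1) = 2 := by
    have : (2 * (a * (α - 1) - 2)) * v 0 = 0 := by
      rw [hv1, hv2] at e0; linear_combination -e0 - 2 * v 0 * hsq
    linear_combination (mul_eq_zero.mp ((mul_eq_zero.mp this).resolve_right hv0)).resolve_left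
      htwo
  have : (α + 1) ^ 2 = 0 := by
    linear_combination (α - 1) ^ 2 * hsq - α * (a * (α - 1) + 2) * hlin
  exact hα (eq_neg_of_add_eq_zero_left (pow_eq_zero_iff two_ne_zero |>.mp this))

theorem not_linearIndependent_grad_iff (htwo : (2 : K) ≠ 0) (hα0 : α ≠ 0) (hα1 : α ≠ -1)
    (hv : v ≠ 0) (hF : v 1 * v 2 = v 0 ^ 2) :
    ¬ LinearIndependent K ![gradF v, gradG α v] ↔ gradF v = 0 := by
  rw [linearIndependent_fin2]
  simp only [Matrix.cons_val_zero, Matrix.cons_val_one]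
  constructor
  · intro h
    obtain ⟨a, ha⟩ : ∃ a, a • gradG α v = gradF v := by
      simpa [gradG_ne_zero hα0 hv hF] using h
    by_cases ha0 : a = 0
    · rw [← ha, ha0, zero_smul]
    · exact absurd ha (gradF_ne_smul_gradG htwo hα1 hv hF ha0)
  · exact fun h ⟨_, hall⟩ => hall 0 (by rw [h, zero_smul])

lemma gradF_eq_zero_iff (htwo : (2 : K) ≠ 0) :
    gradF v = 0 ↔ v 0 = 0 ∧ v 1 = 0 ∧ v 2 = 0 := by
  constructor
  · intro h
    have e0 : -2 * v 0 = 0 := congrFun h 0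
    exact ⟨by simpa [htwo] using e0, congrFun h 2, congrFun h 1⟩
  · rintro ⟨h0, h1, h2⟩
    funext i
    fin_cases i <;> simp [gradF, h0, h1, h2]

lemma coords_zero_one_two_eq_zero_iff (hv : v ≠ 0) (hG : v 3 * v 4 = v 0 * (v 1 - α * v 2 + (α - 1) * v 0)) :
    (v 0 = 0 ∧ v 1 = 0 ∧ v 2 = 0) ↔
      (∃ c : K, c ≠ 0 ∧ v = c • ![0, 0, 0, 1, 0]) ∨
        (∃ c : K, c ≠ 0 ∧ v = c • ![0, 0, 0, 0, 1]) := by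
  constructor
  · rintro ⟨h0, h1, h2⟩
    rw [h0, zero_mul] at hG
    rcases mul_eq_zero.mp hG with h3 | h4
    · refine .inr ⟨v 4, fun h4 => hv (eq_zero_of_coords h0 h1 h2 h3 h4), ?_⟩
      funext i
      fin_cases i <;> simp [h0, h1, h2, h3]
    · refine .inl ⟨v 3, fun h3 => hv (eq_zero_of_coords h0 h1 h2 h3 h4), ?_⟩
      funext i
      fin_cases i <;> simp [h0, h1, h2, h4]
  · rintro (⟨c, -, rfl⟩ | ⟨c, -, rfl⟩) <;> simp

end MinitwistorQuartic

open MinitwistorQuartic in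
/-- For −1 < α < 0 real, a point of the surface 𝒯 ⊂ CP⁴ defined by
F = y₁y₂ − y₀² = 0 and G = y₃y₄ − y₀(y₁ − αy₂ + (α−1)y₀) = 0 is singular
(in the sense of the Jacobian criterion: the gradients of F and G at a
representative are linearly dependent) if and only if it is one of the two
points (0:0:0:1:0), (0:0:0:0:1). -/
theorem stmt_4 (α : ℝ) (h1 : -1 < α) (h2 : α < 0) :
    ∀ v : Fin 5 → ℂ, v ≠ 0 →
      v 1 * v 2 = (v 0) ^ 2 →
      v 3 * v 4 = v 0 * (v 1 - (α : ℂ) * v 2 + ((α : ℂ) - 1) * v 0) →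
      ((¬ LinearIndependent ℂ
          ![![-2 * v 0, v 2, v 1, 0, 0],
            ![-(v 1) + (α : ℂ) * v 2 - 2 * ((α : ℂ) - 1) * v 0,
              -(v 0), (α : ℂ) * v 0, v 4, v 3]]) ↔
        ((∃ c : ℂ, c ≠ 0 ∧ v = c • ![0, 0, 0, 1, 0]) ∨
          (∃ c : ℂ, c ≠ 0 ∧ v = c • ![0, 0, 0, 0, 1]))) := by
  intro v hv hF hG
  have hα0 : (α : ℂ) ≠ 0 := Complex.ofReal_ne_zero.mpr h2.ne
  have hα1 : (α : ℂ) ≠ -1 := by exact_mod_cast h1.ne'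
  change ¬ LinearIndependent ℂ ![gradF v, gradG (α : ℂ) v] ↔ _
  rw [not_linearIndependent_grad_iff two_ne_zero hα0 hα1 hv hF, gradF_eq_zero_iff two_ne_zero]
  exact coords_zero_one_two_eq_zero_iff hv hG
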